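/- arXiv:1312.2571 — 2 statements merged into one kernel-verified Lean document; each statement's English description precedes it below -/
import Mathlib

section
/- On the event {W > 0}, one has (1/n) log N_n → log((2d+1)p) almost surely. -/
open MeasureTheory Filter ProbabilityTheory

noncomputable section

/-- A site of the oriented graph on `ℤ^d × ℕ`. -/
abbrev Site (d : ℕ) := (Fin d → ℤ) × ℕ

/-- A percolation configuration. -/
abbrev Config (d : ℕ) := Site d → Site d → Bool

/-- The ℓ¹ norm on `ℤ^d`. -/
def norm1 {d : ℕ} (x : Fin d → ℤ) : ℤ := ∑ i, |x i|

/-- The set of open paths of length `n` starting from `(0,0)` in the configuration `ω`. -/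
def openPathsFromOrigin {d : ℕ} (ω : Config d) (n : ℕ) : Set (ℕ → Fin d → ℤ) :=
  {γ | γ 0 = 0 ∧ (∀ i, i < n → norm1 (γ (i + 1) - γ i) ≤ 1 ∧
      ω (γ i, i) (γ (i + 1), i + 1) = true) ∧ ∀ i, n ≤ i → γ i = γ n}

/-- `N_n`: the number of open paths of length `n` starting from `(0,0)`. -/
def NPaths {d : ℕ} (ω : Config d) (n : ℕ) : ℕ := Nat.card (openPathsFromOrigin ω n)

/-! If `N_n / c ^ n → W > 0`, then `log N_n = n log c + O(1)`, so `(1/n) log N_n → log c`. -/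

open Topology

theorem ne_zero_of_tendsto_div_pow {a : ℕ → ℝ} {c L : ℝ} (hL : L ≠ 0)
    (h : Tendsto (fun n => a n / c ^ n) atTop (𝓝 L)) : c ≠ 0 := by
  rintro rfl
  have h_zero : Tendsto (fun n => a n / 0 ^ n) atTop (𝓝 0) :=
    tendsto_const_nhds.congr' <| (eventually_ne_atTop 0).mono fun n hn => by
      simp [zero_pow hn]
  exact hL (tendsto_nhds_unique h h_zero)

/-- As `Real.log x = Real.log |x|`, this holds for `a`, `c` and `L` of either sign. -/
theorem tendsto_inv_mul_log_of_tendsto_div_pow {a : ℕ → ℝ} {c L : ℝ} (hL : L ≠ 0)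
    (h : Tendsto (fun n => a n / c ^ n) atTop (𝓝 L)) :
    Tendsto (fun n : ℕ => (1 / n : ℝ) * Real.log (a n)) atTop (𝓝 (Real.log c)) := by
  have hc : c ≠ 0 := ne_zero_of_tendsto_div_pow hL h
  have h_log : Tendsto (fun n => Real.log (a n / c ^ n)) atTop (𝓝 (Real.log L)) :=
    (Real.continuousAt_log hL).tendsto.comp h
  have h_avg : Tendsto (fun n : ℕ => (1 / n : ℝ) * Real.log (a n / c ^ n) + Real.log c)
      atTop (𝓝 (Real.log c)) := by
    simpa using (tendsto_one_div_atTop_nhds_zero_nat.mul h_log).add_const (Real.log c)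
  refine h_avg.congr' ?_
  filter_upwards [h.eventually_ne hL, eventually_ne_atTop 0] with n han hn
  have ha : a n ≠ 0 := fun ha => han (by simp [ha])
  rw [Real.log_div ha (pow_ne_zero n hc), Real.log_pow]
  field_simp
  ring

theorem log_NPaths_on_W_pos_general {d : ℕ} (p : ℝ)
    (P : Measure (Config d)) (W : Config d → ℝ)
    (hW : ∀ᵐ ω ∂P, Tendsto (fun n => (NPaths ω n : ℝ) / ((2 * d + 1) * p) ^ n)
      atTop (nhds (W ω))) :
    ∀ᵐ ω ∂P, 0 < W ω →
      Tendsto (fun n : ℕ => (1 / n : ℝ) * Real.log (NPaths ω n))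
        atTop (nhds (Real.log ((2 * d + 1) * p))) := by
  filter_upwards [hW] with ω h_lim hW_pos
  exact tendsto_inv_mul_log_of_tendsto_div_pow hW_pos.ne' h_lim

/-- On the event `{W > 0}`, where `W` is the a.s. limit of the martingale
`N_n / ((2d+1)p)^n`, one has `(1/n) log N_n → log((2d+1)p)` almost surely. -/
theorem log_NPaths_on_W_pos {d : ℕ} (p : ℝ) (hp0 : 0 < p) (hp1 : p ≤ 1)
    (P : Measure (Config d)) [IsProbabilityMeasure P] (W : Config d → ℝ)
    (hW : ∀ᵐ ω ∂P, Tendsto (fun n => (NPaths ω n : ℝ) / ((2 * d + 1) * p) ^ n)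
      atTop (nhds (W ω))) :
    ∀ᵐ ω ∂P, 0 < W ω →
      Tendsto (fun n : ℕ => (1 / n : ℝ) * Real.log (NPaths ω n))
        atTop (nhds (Real.log ((2 * d + 1) * p))) :=
  log_NPaths_on_W_pos_general p P W hW
end
end

section
/- Let (Ω, F, P, θ) be a measure-preserving system and σ : Ω → N a random variable such that for all measurable A ∈ B(R) and B ∈ F, P(σ ∈ A, θ̃^{-1}(B)) = P(σ ∈ A) P(B), where θ̃ is the (random) translation associated with σ. Then the random variables (σ ∘ θ̃^j)_{j≥0} are independent and identically distributed under P. -/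
open MeasureTheory ProbabilityTheory

section

variable {Ω β : Type*} [MeasurableSpace Ω] [MeasurableSpace β] {μ : Measure Ω}

theorem MeasureTheory.MeasurePreserving.identDistrib_id {T : Ω → Ω}
    (hT : MeasurePreserving T μ μ) : IdentDistrib T id μ μ :=
  ⟨hT.measurable.aemeasurable, aemeasurable_id, by rw [Measure.map_id, hT.map_eq]⟩

theorem MeasureTheory.MeasurePreserving.identDistrib_comp_iterate {θ : Ω → Ω}
    (hθ : MeasurePreserving θ μ μ) {σ : Ω → β} (hσ : Measurable σ) (j : ℕ) :
    IdentDistrib (σ ∘ θ^[j]) σ μ μ :=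
  (hθ.iterate j).identDistrib_id.comp hσ

theorem ProbabilityTheory.iIndepFun_of_measure_iInter_range_eq_prod [IsProbabilityMeasure μ]
    {f : ℕ → Ω → β}
    (h : ∀ (n : ℕ) (A : ℕ → Set β), (∀ j, MeasurableSet (A j)) →
      μ (⋂ j ∈ Finset.range n, f j ⁻¹' A j) = ∏ j ∈ Finset.range n, μ (f j ⁻¹' A j)) :
    iIndepFun f μ := by
  classical
  rw [iIndepFun_iff_measure_inter_preimage_eq_mul]
  intro S sets hsets
  obtain ⟨n, hSn⟩ : ∃ n, S ⊆ Finset.range n := ⟨_, S.subset_range_sup_succ⟩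
  set A : ℕ → Set β := fun j => if j ∈ S then sets j else Set.univ
  have hA : ∀ j, MeasurableSet (A j) := fun j => by
    by_cases hj : j ∈ S <;> simp [A, hj, hsets]
  have hinter : ⋂ j ∈ S, f j ⁻¹' sets j = ⋂ j ∈ Finset.range n, f j ⁻¹' A j := by
    ext ω
    simp only [Set.mem_iInter, Set.mem_preimage, A]
    refine ⟨fun hω j _ => ?_, fun hω j hj => by simpa [hj] using hω j (hSn hj)⟩
    by_cases hj : j ∈ S <;> simp [hj, hω]
  have hprod : ∏ j ∈ S, μ (f j ⁻¹' sets j) = ∏ j ∈ Finset.range n, μ (f j ⁻¹' A j) := by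
    refine Finset.prod_subset_one_on_sdiff hSn (fun j hj => ?_) (fun j hj => by simp [A, hj])
    simp [A, (Finset.mem_sdiff.1 hj).2]
  rw [hinter, hprod, h n A hA]

/-- The future `(σ ∘ θ^[j+1])_j` is a function of `θ`, hence independent of `σ`, and by
invariance of `μ` it has the law of `(σ ∘ θ^[j])_j`; so induction on `n` peels off one factor
at a time. -/
theorem ProbabilityTheory.IndepFun.measure_iInter_range_iterate_preimage [IsProbabilityMeasure μ]
    {θ : Ω → Ω} (hθ : MeasurePreserving θ μ μ) {σ : Ω → β} (hσ : Measurable σ)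
    (hind : IndepFun σ θ μ) (n : ℕ) (A : ℕ → Set β) (hA : ∀ j, MeasurableSet (A j)) :
    μ (⋂ j ∈ Finset.range n, (σ ∘ θ^[j]) ⁻¹' A j) = ∏ j ∈ Finset.range n, μ (σ ⁻¹' A j) := by
  induction n generalizing A with
  | zero => simp
  | succ n ih =>
    set future := ⋂ j ∈ Finset.range n, (σ ∘ θ^[j]) ⁻¹' A (j + 1)
    have hfuture : MeasurableSet future :=
      .biInter (Set.to_countable _) fun j _ => (hσ.comp (hθ.measurable.iterate j)) (hA (j + 1))
    have hsplit : ⋂ j ∈ Finset.range (n + 1), (σ ∘ θ^[j]) ⁻¹' A j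
        = σ ⁻¹' A 0 ∩ θ ⁻¹' future := by
      ext ω
      simp only [future, Set.mem_iInter, Set.mem_inter_iff, Set.mem_preimage, Finset.mem_range,
        Function.comp_apply]
      refine ⟨fun hω => ⟨hω 0 n.succ_pos, fun j hj => ?_⟩, fun ⟨h0, hω⟩ j hj => ?_⟩
      · simpa [Function.iterate_succ_apply] using hω (j + 1) (Nat.succ_lt_succ hj)
      · cases j with
        | zero => exact h0
        | succ j => simpa [Function.iterate_succ_apply] using hω j (Nat.lt_of_succ_lt_succ hj)
    rw [hsplit, hind.measure_inter_preimage_eq_mul _ _ (hA 0) hfuture,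
      hθ.measure_preimage hfuture.nullMeasurableSet, ih (fun j => A (j + 1)) (fun j => hA (j + 1)),
      Finset.prod_range_succ', mul_comm]

end

theorem regeneration_iid_general {Ω : Type*} [MeasurableSpace Ω]
    (P : Measure Ω) [IsProbabilityMeasure P]
    (θ : Ω → Ω) (hθ : MeasurePreserving θ P P)
    (σ : Ω → ℕ) (hσmeas : Measurable σ)
    (hregen : ∀ (A : Set ℕ) (B : Set Ω), MeasurableSet B →
      P ({ω | σ ω ∈ A} ∩ θ ⁻¹' B) = P {ω | σ ω ∈ A} * P B) :
    iIndepFun (fun (j : ℕ) (ω : Ω) => σ (θ^[j] ω)) P ∧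
    ∀ j : ℕ, IdentDistrib (fun ω => σ (θ^[j] ω)) σ P P := by
  have hident := hθ.identDistrib_comp_iterate hσmeas
  have hind : IndepFun σ θ P :=
    indepFun_iff_measure_inter_preimage_eq_mul.2 fun A B _ hB => by
      rw [hθ.measure_preimage hB.nullMeasurableSet]
      exact hregen A B hB
  refine ⟨iIndepFun_of_measure_iInter_range_eq_prod fun n A hA => ?_, hident⟩
  exact (hind.measure_iInter_range_iterate_preimage hθ hσmeas n A hA).trans
    (Finset.prod_congr rfl fun j _ => ((hident j).measure_mem_eq (hA j)).symm)

/-- Abstract regeneration property: if `θ̃` is a measurable map preserving `P` and the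
random variable `σ` satisfies `P(σ ∈ A, θ̃⁻¹(B)) = P(σ ∈ A) P(B)` for every `A` and every
measurable `B`, then the random variables `(σ ∘ θ̃^j)_{j ≥ 0}` are independent and
identically distributed under `P`. -/
theorem regeneration_iid {Ω : Type*} [MeasurableSpace Ω]
    (P : Measure Ω) [IsProbabilityMeasure P]
    (θ : Ω → Ω) (hθmeas : Measurable θ) (hθ : MeasurePreserving θ P P)
    (σ : Ω → ℕ) (hσmeas : Measurable σ)
    (hregen : ∀ (A : Set ℕ) (B : Set Ω), MeasurableSet B →
      P ({ω | σ ω ∈ A} ∩ θ ⁻¹' B) = P {ω | σ ω ∈ A} * P B) :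
    iIndepFun (fun (j : ℕ) (ω : Ω) => σ (θ^[j] ω)) P ∧
    ∀ j : ℕ, IdentDistrib (fun ω => σ (θ^[j] ω)) σ P P :=
  regeneration_iid_general P θ hθ σ hσmeas hregen
end
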